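/- If an extension 0 → L → A → B → 0 of Lie-Rinehart algebras inducing the coupling ᾱ exists (with B projective over R), then the obstruction class ob(ᾱ) = [d_α ρ] ∈ H³(B; Z(L)) vanishes. Conversely, if ob(ᾱ) = 0 then such an extension exists. -/

import Mathlib

/-!
An `R`-linear section `σ` of `π` exists because `B` is projective. Transporting the bracket of
`A` along `σ` gives a connection `α b = ι⁻¹ ∘ ad (σ b) ∘ ι` and a 2-form
`ρ (a, b) = ι⁻¹ (⁅σ a, σ b⁆ - σ ⁅a, b⁆)` forming a lifting pair, and the Jacobi identities of
`A` and `B` give `d_α ρ = 0`, so the obstruction vanishes with `w = 0`.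

Conversely, if `d_α ρ = d_α w` with `w` central, then `P = ρ - w` is again a lifting pair and is
`d_α`-closed. These are exactly the conditions under which
`⁅(l, a), (l', b)⁆ = (⁅l, l'⁆ + α a l' - α b l + P (a, b), ⁅a, b⁆)` satisfies the Jacobi
identity on `L × B`, and `L × B` with this bracket is an extension inducing `ᾱ`.
-/

/-- The order-preserving inclusion `Fin (n-1) → Fin n` skipping the index `j`. -/
def skipIdx {n : ℕ} (j : Fin n) (m : Fin (n - 1)) : Fin n :=
  if (m : ℕ) < (j : ℕ) then ⟨m, by have := m.isLt; omega⟩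
  else ⟨(m : ℕ) + 1, by have := m.isLt; omega⟩

/-- The Chevalley–Eilenberg/de Rham differential of an `M`-valued `p`-form on a Lie
algebroid `B`, twisted by a connection `α : B → (M → M)`. -/
def dform {B M : Type*} [LieRing B] [AddCommGroup M]
    (α : B → M → M) (p : ℕ) (ξ : (Fin p → B) → M) :
    (Fin (p + 1) → B) → M :=
  fun s =>
    (∑ i : Fin (p + 1), ((-1 : ℤ) ^ (i : ℕ)) • α (s i) (ξ (s ∘ i.succAbove))) +
      ∑ i : Fin (p + 1), ∑ j : Fin p,
        if (i : ℕ) ≤ (j : ℕ) then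
          ((-1 : ℤ) ^ ((i : ℕ) + (j : ℕ) + 1)) •
            ξ (fun m : Fin p =>
              if hm : (m : ℕ) = 0 then ⁅s i, s (i.succAbove j)⁆
              else s (i.succAbove (skipIdx j ⟨(m : ℕ) - 1, by have := m.isLt; omega⟩)))
        else 0

universe u v w x

section Dform

variable {B M : Type*} [LieRing B] [AddCommGroup M]

theorem dform_two_apply (α : B → M → M) (ξ : (Fin 2 → B) → M) (s : Fin 3 → B) :
    dform α 2 ξ s =
      α (s 0) (ξ ![s 1, s 2]) - α (s 1) (ξ ![s 0, s 2]) + α (s 2) (ξ ![s 0, s 1])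
        - ξ ![⁅s 0, s 1⁆, s 2] + ξ ![⁅s 0, s 2⁆, s 1] - ξ ![⁅s 1, s 2⁆, s 0] := by
  have face₀ : s ∘ Fin.succAbove 0 = ![s 1, s 2] := by ext i; fin_cases i <;> rfl
  have face₁ : s ∘ Fin.succAbove 1 = ![s 0, s 2] := by ext i; fin_cases i <;> rfl
  have face₂ : s ∘ Fin.succAbove 2 = ![s 0, s 1] := by ext i; fin_cases i <;> rfl
  have bracketFace : ∀ (i : Fin 3) (j : Fin 2), (fun m : Fin 2 =>
      if hm : (m : ℕ) = 0 then ⁅s i, s (i.succAbove j)⁆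
      else s (i.succAbove (skipIdx j ⟨(m : ℕ) - 1, by omega⟩))) =
        ![⁅s i, s (i.succAbove j)⁆, s (i.succAbove (skipIdx j 0))] := by
    intro i j; ext m; fin_cases m <;> rfl
  unfold dform
  rw [Fin.sum_univ_three, Fin.sum_univ_three, face₀, face₁, face₂]
  simp only [Fin.sum_univ_two, bracketFace]
  norm_num [skipIdx]
  abel

theorem map_dform {N G : Type*} [AddCommGroup N] [FunLike G M N] [AddMonoidHomClass G M N]
    (φ : G) (α : B → M → M) (β : B → N → N) (hαβ : ∀ b m, φ (α b m) = β b (φ m))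
    {p : ℕ} (ξ : (Fin p → B) → M) (η : (Fin p → B) → N) (hξη : ∀ v, φ (ξ v) = η v)
    (s : Fin (p + 1) → B) : φ (dform α p ξ s) = dform β p η s := by
  simp only [dform, map_add, map_sum, map_zsmul, hαβ, hξη, apply_ite φ, map_zero]

variable {F : Type*} [FunLike F M M] [AddMonoidHomClass F M M]

theorem dform_zero (α : B → F) (p : ℕ) : dform (fun b x => α b x) p 0 = 0 := by
  ext s
  simp [dform]

theorem dform_sub (α : B → F) {p : ℕ} (ξ η : (Fin p → B) → M) :
    dform (fun b x => α b x) p (ξ - η) =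
      dform (fun b x => α b x) p ξ - dform (fun b x => α b x) p η := by
  ext s
  simp only [dform, Pi.sub_apply, add_sub_add_comm, ← Finset.sum_sub_distrib, ite_sub_ite,
    sub_zero, ← smul_sub, map_sub]

end Dform

namespace AlternatingMap

variable {R M N : Type*} [CommRing R] [AddCommGroup M] [Module R M] [AddCommGroup N]
  [Module R N] (f : M [⋀^Fin 2]→ₗ[R] N)

theorem map_fin_two_self (a : M) : f ![a, a] = 0 :=
  f.map_eq_zero_of_eq _ (i := 0) (j := 1) rfl (by decide)

theorem map_fin_two_swap (a b : M) : f ![b, a] = -f ![a, b] := by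
  have : ![b, a] = ![a, b] ∘ Equiv.swap 0 1 := by ext i; fin_cases i <;> rfl
  rw [this, f.map_swap _ (by decide)]

theorem map_fin_two_add_right (a b b' : M) : f ![a, b + b'] = f ![a, b] + f ![a, b'] := by
  rw [f.map_fin_two_swap (b + b') a, map_vecCons_add, neg_add, ← f.map_fin_two_swap,
    ← f.map_fin_two_swap]

theorem map_fin_two_smul_right (c : R) (a b : M) : f ![a, c • b] = c • f ![a, b] := by
  rw [f.map_fin_two_swap (c • b) a, map_vecCons_smul, ← smul_neg, ← f.map_fin_two_swap]

end AlternatingMap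

namespace LinearMap

variable {R M N : Type*} [CommRing R] [AddCommGroup M] [Module R M] [AddCommGroup N]
  [Module R N]

def IsAlt.toAlternatingMap {g : M →ₗ[R] M →ₗ[R] N} (hg : g.IsAlt) : M [⋀^Fin 2]→ₗ[R] N where
  toFun v := g (v 0) (v 1)
  map_update_add' m i x y := by
    fin_cases i <;> simp
  map_update_smul' m i c x := by
    fin_cases i <;> simp
  map_eq_zero_of_eq' v i j hv hij := by
    fin_cases i <;> fin_cases j <;> simp_all [hg.self_eq_zero]

@[simp]
theorem IsAlt.toAlternatingMap_apply {g : M →ₗ[R] M →ₗ[R] N} (hg : g.IsAlt) (v : Fin 2 → M) :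
    hg.toAlternatingMap v = g (v 0) (v 1) := rfl

end LinearMap

section TwistedProduct

variable {R B L F : Type*} [CommRing R] [LieRing B] [Module R B] [LieRing L] [LieAlgebra R L]
  [FunLike F L L] (α : B → F) (P : B [⋀^Fin 2]→ₗ[R] L)

def twistedBracket (x y : L × B) : L × B :=
  (⁅x.1, y.1⁆ + α x.2 y.1 - α y.2 x.1 + P ![x.2, y.2], ⁅x.2, y.2⁆)

variable {α P}

theorem twistedBracket_self (x : L × B) : twistedBracket α P x x = 0 := by
  ext
  · simp [twistedBracket, P.map_fin_two_self]
  · exact lie_self _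

theorem twistedBracket_smul_right {anchor : B → R → R}
    (hLeibB : ∀ (a b : B) (f : R), ⁅a, f • b⁆ = f • ⁅a, b⁆ + anchor a f • b)
    (hsmul : ∀ (f : R) (b : B) (l : L), α (f • b) l = f • α b l)
    (hLeib : ∀ (b : B) (f : R) (l : L), α b (f • l) = f • α b l + anchor b f • l)
    (x y : L × B) (f : R) :
    twistedBracket α P x (f • y) = f • twistedBracket α P x y + anchor x.2 f • y := by
  ext
  · simp only [twistedBracket, Prod.smul_fst, Prod.smul_snd, Prod.fst_add, lie_smul, hLeib, hsmul,
      P.map_fin_two_smul_right, smul_add, smul_sub]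
    abel
  · exact hLeibB _ _ _

theorem twistedBracket_inl (hzero : ∀ l, α 0 l = 0) (x : L × B) (l : L) :
    twistedBracket α P x (l, 0) = (α x.2 l + ⁅x.1, l⁆, 0) := by
  ext
  · simp [twistedBracket, hzero, P.map_coord_zero 1, add_comm]
  · exact lie_zero _

variable [AddMonoidHomClass F L L]

theorem twistedBracket_add_left (hadd : ∀ b b' l, α (b + b') l = α b l + α b' l)
    (x y z : L × B) :
    twistedBracket α P (x + y) z = twistedBracket α P x z + twistedBracket α P y z := by
  ext
  · simp only [twistedBracket, Prod.fst_add, Prod.snd_add, add_lie, hadd, map_add,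
      P.map_vecCons_add]
    abel
  · exact add_lie _ _ _

theorem twistedBracket_add_right (hadd : ∀ b b' l, α (b + b') l = α b l + α b' l)
    (x y z : L × B) :
    twistedBracket α P x (y + z) = twistedBracket α P x y + twistedBracket α P x z := by
  ext
  · simp only [twistedBracket, Prod.fst_add, Prod.snd_add, lie_add, hadd, map_add,
      P.map_fin_two_add_right]
    abel
  · exact lie_add _ _ _

theorem twistedBracket_leibniz
    (hD : ∀ (b : B) (l l' : L), α b ⁅l, l'⁆ = ⁅α b l, l'⁆ + ⁅l, α b l'⁆)
    (hF : ∀ (a b : B) (l : L), ⁅P ![a, b], l⁆ = α a (α b l) - α b (α a l) - α ⁅a, b⁆ l)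
    (hdP : ∀ s, dform (fun b x => α b x) 2 P s = 0) (x y z : L × B) :
    twistedBracket α P x (twistedBracket α P y z) =
      twistedBracket α P (twistedBracket α P x y) z +
        twistedBracket α P y (twistedBracket α P x z) := by
  obtain ⟨l₁, b₁⟩ := x
  obtain ⟨l₂, b₂⟩ := y
  obtain ⟨l₃, b₃⟩ := z
  ext
  · have cocycle := hdP ![b₁, b₂, b₃]
    simp only [dform_two_apply, Matrix.cons_val_zero, Matrix.cons_val_one, Matrix.cons_val_two,
      Matrix.head_cons, Matrix.tail_cons] at cocycle
    have skew₁ : ⁅l₁, P ![b₂, b₃]⁆ = -⁅P ![b₂, b₃], l₁⁆ := (lie_skew _ _).symm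
    have skew₂ : ⁅l₂, P ![b₁, b₃]⁆ = -⁅P ![b₁, b₃], l₂⁆ := (lie_skew _ _).symm
    have skew₃ : ⁅l₂, α b₃ l₁⁆ = -⁅α b₃ l₁, l₂⁆ := (lie_skew _ _).symm
    simp only [twistedBracket, lie_add, lie_sub, add_lie, sub_lie, map_add, map_sub, hD,
      skew₁, skew₂, skew₃, hF, P.map_fin_two_swap ⁅b₂, b₃⁆, P.map_fin_two_swap ⁅b₁, b₃⁆,
      leibniz_lie l₁ l₂ l₃, Prod.fst_add]
    -- Jacobi in `L`, the derivation rule and `ad P = F_α` leave exactly `d_α P = 0`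
    linear_combination (norm := abel) cocycle
  · exact leibniz_lie _ _ _

abbrev twistedLieRing (hadd : ∀ b b' l, α (b + b') l = α b l + α b' l)
    (hD : ∀ (b : B) (l l' : L), α b ⁅l, l'⁆ = ⁅α b l, l'⁆ + ⁅l, α b l'⁆)
    (hF : ∀ (a b : B) (l : L), ⁅P ![a, b], l⁆ = α a (α b l) - α b (α a l) - α ⁅a, b⁆ l)
    (hdP : ∀ s, dform (fun b x => α b x) 2 P s = 0) : LieRing (ULift.{u} (L × B)) where
  __ := ULift.addCommGroup
  bracket x y := ⟨twistedBracket α P x.down y.down⟩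
  add_lie x y z := congrArg ULift.up (twistedBracket_add_left hadd x.down y.down z.down)
  lie_add x y z := congrArg ULift.up (twistedBracket_add_right hadd x.down y.down z.down)
  lie_self x := congrArg ULift.up (twistedBracket_self x.down)
  leibniz_lie x y z := congrArg ULift.up (twistedBracket_leibniz hD hF hdP x.down y.down z.down)

end TwistedProduct

theorem smul_lie_of_leibniz {R A : Type*} [CommRing R] [LieRing A] [Module R A]
    {anchor : A → R → R} (h : ∀ (x y : A) (f : R), ⁅x, f • y⁆ = f • ⁅x, y⁆ + anchor x f • y)
    (x y : A) (f : R) : ⁅f • x, y⁆ = f • ⁅x, y⁆ - anchor y f • x := by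
  rw [← lie_skew, h, ← lie_skew y x, smul_neg]
  abel

section SectionOfExtension

variable {k R A B L : Type*} [CommRing k] [CommRing R]
  [LieRing A] [Module R A] [LieRing B] [Module R B] [LieRing L] [LieAlgebra R L]

def sectionCurvature (σ : B → A) (a b : B) : A := ⁅σ a, σ b⁆ - σ ⁅a, b⁆

theorem dform_sectionCurvature {G : Type*} [FunLike G B A] [AddMonoidHomClass G B A] (σ : G)
    (s : Fin 3 → B) :
    dform (fun b x => ⁅σ b, x⁆) 2 (fun v => sectionCurvature σ (v 0) (v 1)) s = 0 := by
  simp only [dform_two_apply, sectionCurvature, Matrix.cons_val_zero, Matrix.cons_val_one, lie_sub]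
  generalize s 0 = a, s 1 = b, s 2 = c
  have jacobiA : ⁅σ a, ⁅σ b, σ c⁆⁆ - ⁅σ b, ⁅σ a, σ c⁆⁆ + ⁅σ c, ⁅σ a, σ b⁆⁆ = 0 := by
    rw [leibniz_lie, ← lie_skew ⁅σ a, σ b⁆ (σ c)]
    abel
  have jacobiB : ⁅⁅a, b⁆, c⁆ - ⁅⁅a, c⁆, b⁆ + ⁅⁅b, c⁆, a⁆ = 0 := by
    rw [← lie_skew ⁅a, c⁆ b, ← lie_skew ⁅b, c⁆ a, leibniz_lie a b c]
    abel
  replace jacobiB := congrArg σ jacobiB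
  rw [map_add, map_sub, map_zero] at jacobiB
  rw [← lie_skew (σ ⁅a, b⁆) (σ c), ← lie_skew (σ ⁅a, c⁆) (σ b), ← lie_skew (σ ⁅b, c⁆) (σ a)]
  linear_combination (norm := abel) jacobiA + jacobiB

variable {ι : L →ₗ[R] A} {π : A →ₗ[R] B}

theorem exists_connection_of_section [Algebra k R] [Module k L] [IsScalarTower k R L]
    {aA : A →ₗ[R] Derivation k R R}
    (hLeibA : ∀ (x y : A) (f : R), ⁅x, f • y⁆ = f • ⁅x, y⁆ + aA x f • y)
    (hι : Function.Injective ι) (hexact : Function.Exact ι π)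
    (hπb : ∀ x y : A, π ⁅x, y⁆ = ⁅π x, π y⁆) (σ : B → A) :
    ∃ α : B → L →ₗ[k] L, ∀ b l, ι (α b l) = ⁅σ b, ι l⁆ := by
  have hmem : ∀ b l, ∃ l', ι l' = ⁅σ b, ι l⁆ := fun b l =>
    (hexact _).mp (by rw [hπb, hexact.apply_apply_eq_zero, lie_zero])
  choose α hα using hmem
  refine ⟨fun b => { toFun := α b, map_add' := fun l l' => hι ?_, map_smul' := fun c l => hι ?_ },
    hα⟩
  · rw [map_add, hα, hα, hα, map_add, lie_add]
  · -- the anchor takes values in `k`-derivations, which kill `algebraMap k R c`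
    rw [RingHom.id_apply, hα, ← algebraMap_smul R c l, ← algebraMap_smul R c (α b l), map_smul,
      map_smul, hLeibA, Derivation.map_algebraMap, zero_smul, add_zero, hα]

theorem exists_curvatureForm_of_section {aA : A → R → R} {aB : B → R → R}
    (hLeibA : ∀ (x y : A) (f : R), ⁅x, f • y⁆ = f • ⁅x, y⁆ + aA x f • y)
    (hLeibB : ∀ (a b : B) (f : R), ⁅a, f • b⁆ = f • ⁅a, b⁆ + aB a f • b)
    (hι : Function.Injective ι) (hexact : Function.Exact ι π)
    (hπb : ∀ x y : A, π ⁅x, y⁆ = ⁅π x, π y⁆) {σ : B →ₗ[R] A} (hσ : ∀ b, π (σ b) = b)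
    (hσa : ∀ b f, aA (σ b) f = aB b f) :
    ∃ ρ : B [⋀^Fin 2]→ₗ[R] L, ∀ v, ι (ρ v) = sectionCurvature σ (v 0) (v 1) := by
  let g : B →ₗ[R] B →ₗ[R] A := LinearMap.mk₂ R (sectionCurvature σ)
    (fun a a' b => by simp only [sectionCurvature, map_add, add_lie]; abel)
    (fun f a b => by
      simp only [sectionCurvature, map_smul, smul_lie_of_leibniz hLeibA,
        smul_lie_of_leibniz hLeibB, map_sub, hσa, smul_sub]
      abel)
    (fun a b b' => by simp only [sectionCurvature, map_add, lie_add]; abel)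
    (fun f a b => by
      simp only [sectionCurvature, map_smul, hLeibA, hLeibB, map_add, hσa, smul_sub]
      abel)
  have hg : g.IsAlt := fun a => by simp [g, sectionCurvature]
  have hmem : ∀ v, hg.toAlternatingMap v ∈ LinearMap.range ι := fun v =>
    (hexact _).mp (by simp [g, sectionCurvature, hπb, hσ])
  exact ⟨(LinearEquiv.ofInjective ι hι).symm.toLinearMap.compAlternatingMap
    (hg.toAlternatingMap.codRestrict _ hmem),
    fun v => LinearEquiv.ofInjective_symm_apply ι ⟨_, hmem v⟩⟩

variable [Module k L] {σ : B →ₗ[R] A} {α : B → L →ₗ[k] L}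

theorem induced_connection_add (hι : Function.Injective ι)
    (hα : ∀ b l, ι (α b l) = ⁅σ b, ι l⁆) (b b' : B) : α (b + b') = α b + α b' :=
  LinearMap.ext fun l => hι (by simp only [hα, LinearMap.add_apply, map_add, add_lie])

theorem induced_connection_smul {aA : A → R → R}
    (hLeibA : ∀ (x y : A) (f : R), ⁅x, f • y⁆ = f • ⁅x, y⁆ + aA x f • y)
    (hιa : ∀ l f, aA (ι l) f = 0) (hι : Function.Injective ι)
    (hα : ∀ b l, ι (α b l) = ⁅σ b, ι l⁆) (f : R) (b : B) (l : L) : α (f • b) l = f • α b l :=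
  hι (by rw [hα, map_smul, smul_lie_of_leibniz hLeibA, hιa, zero_smul, sub_zero, map_smul, hα])

theorem induced_connection_smul_right {aA : A → R → R} {aB : B → R → R}
    (hLeibA : ∀ (x y : A) (f : R), ⁅x, f • y⁆ = f • ⁅x, y⁆ + aA x f • y)
    (hσa : ∀ b f, aA (σ b) f = aB b f) (hι : Function.Injective ι)
    (hα : ∀ b l, ι (α b l) = ⁅σ b, ι l⁆) (b : B) (f : R) (l : L) :
    α b (f • l) = f • α b l + aB b f • l :=
  hι (by rw [hα, map_smul, hLeibA, hσa, map_add, map_smul, map_smul, hα])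

theorem induced_connection_lie (hιb : ∀ l l' : L, ι ⁅l, l'⁆ = ⁅ι l, ι l'⁆)
    (hι : Function.Injective ι) (hα : ∀ b l, ι (α b l) = ⁅σ b, ι l⁆) (b : B) (l l' : L) :
    α b ⁅l, l'⁆ = ⁅α b l, l'⁆ + ⁅l, α b l'⁆ :=
  hι (by rw [hα, map_add, hιb, hιb, hιb, hα, hα, leibniz_lie])

theorem induced_connection_eq_add_ad (α₀ : B → L →ₗ[k] L)
    (hcoup : ∀ x : A, ∃ l₀ : L, ∀ l : L, ⁅x, ι l⁆ = ι (α₀ (π x) l + ⁅l₀, l⁆))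
    (hσ : ∀ b, π (σ b) = b) (hι : Function.Injective ι)
    (hα : ∀ b l, ι (α b l) = ⁅σ b, ι l⁆) (b : B) : ∃ l₀ : L, ∀ l : L, α b l = α₀ b l + ⁅l₀, l⁆ := by
  obtain ⟨l₀, hl₀⟩ := hcoup (σ b)
  exact ⟨l₀, fun l => hι (by rw [hα, hl₀, hσ])⟩

variable {ρ : B [⋀^Fin 2]→ₗ[R] L}

theorem induced_curvature (hιb : ∀ l l' : L, ι ⁅l, l'⁆ = ⁅ι l, ι l'⁆)
    (hι : Function.Injective ι) (hα : ∀ b l, ι (α b l) = ⁅σ b, ι l⁆)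
    (hρ : ∀ v, ι (ρ v) = sectionCurvature σ (v 0) (v 1)) (b₁ b₂ : B) (l : L) :
    α b₁ (α b₂ l) - α b₂ (α b₁ l) - α ⁅b₁, b₂⁆ l = ⁅ρ ![b₁, b₂], l⁆ :=
  hι (by simp only [map_sub, hα, hιb, hρ, sectionCurvature, Matrix.cons_val_zero,
    Matrix.cons_val_one, sub_lie, lie_lie])

theorem dform_induced_curvature (hι : Function.Injective ι)
    (hα : ∀ b l, ι (α b l) = ⁅σ b, ι l⁆) (hρ : ∀ v, ι (ρ v) = sectionCurvature σ (v 0) (v 1))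
    (s : Fin 3 → B) : dform (fun b x => α b x) 2 ρ s = 0 :=
  hι (by rw [map_dform ι _ _ hα _ _ hρ, dform_sectionCurvature, map_zero])

end SectionOfExtension

theorem exists_extension_of_dform_eq_zero {k : Type u} [CommRing k] {R : Type v} [CommRing R]
    [Algebra k R] {B : Type w} [LieRing B] [Module R B] {L : Type x} [LieRing L] [Module k L]
    [LieAlgebra R L] {F : Type*} [FunLike F L L] [AddMonoidHomClass F L L]
    (aB : B →ₗ[R] Derivation k R R)
    (hLeibB : ∀ (s t : B) (f : R), ⁅s, f • t⁆ = f • ⁅s, t⁆ + aB s f • t)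
    (α₀ : B → L →ₗ[k] L) (α : B → F) (P : B [⋀^Fin 2]→ₗ[R] L)
    (hadd : ∀ b b' l, α (b + b') l = α b l + α b' l)
    (hsmul : ∀ (f : R) (b : B) (l : L), α (f • b) l = f • α b l)
    (hD : ∀ (b : B) (l l' : L), α b ⁅l, l'⁆ = ⁅α b l, l'⁆ + ⁅l, α b l'⁆)
    (hLeib : ∀ (b : B) (f : R) (l : L), α b (f • l) = f • α b l + aB b f • l)
    (hlift : ∀ b : B, ∃ l₀ : L, ∀ l : L, α b l = α₀ b l + ⁅l₀, l⁆)
    (hF : ∀ (a b : B) (l : L), ⁅P ![a, b], l⁆ = α a (α b l) - α b (α a l) - α ⁅a, b⁆ l)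
    (hdP : ∀ s, dform (fun b x => α b x) 2 P s = 0) :
    ∃ (A : Type (max v w x)) (_ : LieRing A) (_ : Module R A)
        (aA : A →ₗ[R] Derivation k R R) (ι : L →ₗ[R] A) (π : A →ₗ[R] B),
        (∀ (x y : A) (f : R), ⁅x, f • y⁆ = f • ⁅x, y⁆ + aA x f • y) ∧
        Function.Injective ι ∧ Function.Surjective π ∧
        (∀ l l' : L, ι ⁅l, l'⁆ = ⁅ι l, ι l'⁆) ∧
        (∀ x y : A, π ⁅x, y⁆ = ⁅π x, π y⁆) ∧
        LinearMap.range ι = LinearMap.ker π ∧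
        (∀ x : A, aA x = aB (π x)) ∧
        (∀ x : A, ∃ l₀ : L, ∀ l : L, ⁅x, ι l⁆ = ι (α₀ (π x) l + ⁅l₀, l⁆)) := by
  let e : ULift.{v} (L × B) ≃ₗ[R] L × B := ULift.moduleEquiv
  let _ := twistedLieRing.{v} hadd hD hF hdP
  have hzero : ∀ l, α 0 l = 0 := fun l => by simpa using hsmul 0 0 l
  let ι : L →ₗ[R] ULift.{v} (L × B) := e.symm.toLinearMap ∘ₗ LinearMap.inl R L B
  let π : ULift.{v} (L × B) →ₗ[R] B := LinearMap.snd R L B ∘ₗ e.toLinearMap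
  have hexact : Function.Exact ι π :=
    (LinearEquiv.conj_exact_iff_exact _ _ e.symm).mpr Function.Exact.inl_snd
  refine ⟨ULift.{v} (L × B), inferInstance, inferInstance, aB ∘ₗ π, ι, π,
    fun x y f => congrArg ULift.up (twistedBracket_smul_right hLeibB hsmul hLeib x.down y.down f),
    fun l l' h => congrArg (fun z => z.down.1) h, fun b => ⟨⟨(0, b)⟩, rfl⟩,
    fun l l' => congrArg ULift.up ?_, fun x y => rfl, (LinearMap.exact_iff.mp hexact).symm,
    fun x => rfl, fun x => ?_⟩
  · show (⁅l, l'⁆, 0) = twistedBracket α P (l, 0) (l', 0)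
    rw [twistedBracket_inl hzero, hzero, zero_add]
  · obtain ⟨l₀, hl₀⟩ := hlift x.down.2
    refine ⟨l₀ + x.down.1, fun l => congrArg ULift.up ?_⟩
    show twistedBracket α P x.down (l, 0) = (α₀ x.down.2 l + ⁅l₀ + x.down.1, l⁆, 0)
    rw [twistedBracket_inl hzero, hl₀, add_lie, add_assoc]

theorem extension_exists_iff_obstruction_vanishes_general
    {k : Type u} [Field k] {R : Type v} [CommRing R] [Algebra k R]
    {B : Type w} [LieRing B] [Module R B]
    [Module.Projective R B]
    {L : Type x} [LieRing L] [LieAlgebra k L] [LieAlgebra R L] [IsScalarTower k R L]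
    (aB : B →ₗ[R] Derivation k R R)
    (hLeibB : ∀ (s t : B) (f : R), ⁅s, f • t⁆ = f • ⁅s, t⁆ + aB s f • t)
    -- the coupling `ᾱ`, represented by a connection `α₀ : B → Der_D(L)`:
    (α₀ : B → L →ₗ[k] L) :
    -- existence of a Lie–Rinehart extension `0 → L → A → B → 0` inducing `ᾱ` …
    (∃ (A : Type (max v w x)) (_ : LieRing A) (_ : Module R A)
        (aA : A →ₗ[R] Derivation k R R) (ι : L →ₗ[R] A) (π : A →ₗ[R] B),
        (∀ (x y : A) (f : R), ⁅x, f • y⁆ = f • ⁅x, y⁆ + aA x f • y) ∧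
        Function.Injective ι ∧ Function.Surjective π ∧
        (∀ l l' : L, ι ⁅l, l'⁆ = ⁅ι l, ι l'⁆) ∧
        (∀ x y : A, π ⁅x, y⁆ = ⁅π x, π y⁆) ∧
        LinearMap.range ι = LinearMap.ker π ∧
        (∀ x : A, aA x = aB (π x)) ∧
        -- the extension induces the coupling represented by `α₀`
        (∀ x : A, ∃ l₀ : L, ∀ l : L, ⁅x, ι l⁆ = ι (α₀ (π x) l + ⁅l₀, l⁆))) ↔
    -- … iff the obstruction class `ob(ᾱ)` vanishes:
    (∃ (α : B → L →ₗ[k] L) (ρ w : B [⋀^Fin 2]→ₗ[R] L),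
        (∀ b b' : B, α (b + b') = α b + α b') ∧
        (∀ (f : R) (b : B) (l : L), α (f • b) l = f • α b l) ∧
        (∀ (b : B) (l l' : L), α b ⁅l, l'⁆ = ⁅α b l, l'⁆ + ⁅l, α b l'⁆) ∧
        (∀ (b : B) (f : R) (l : L), α b (f • l) = f • α b l + aB b f • l) ∧
        -- `α` lifts the same coupling `ᾱ` as `α₀`
        (∀ b : B, ∃ l₀ : L, ∀ l : L, α b l = α₀ b l + ⁅l₀, l⁆) ∧
        -- `(α, ρ)` is a lifting pair: `ad_ρ = F_α`
        (∀ (b₁ b₂ : B) (l : L),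
          α b₁ (α b₂ l) - α b₂ (α b₁ l) - α ⁅b₁, b₂⁆ l = ⁅ρ ![b₁, b₂], l⁆) ∧
        -- `w` takes values in the center `Z(L)`
        (∀ (v : Fin 2 → B) (l : L), ⁅w v, l⁆ = 0) ∧
        -- `d_α ρ = d_ᾱ w`
        (∀ s : Fin 3 → B,
          dform (fun b x => α b x) 2 ⇑ρ s = dform (fun b x => α b x) 2 ⇑w s)) := by
  constructor
  · rintro ⟨A, _, _, aA, ι, π, hLeibA, hι, hπ, hιb, hπb, hrange, haA, hcoup⟩
    have hexact : Function.Exact ι π := LinearMap.exact_iff.mpr hrange.symm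
    obtain ⟨σ, hσ⟩ := Module.projective_lifting_property π LinearMap.id hπ
    replace hσ : ∀ b, π (σ b) = b := LinearMap.congr_fun hσ
    have hσa : ∀ b f, aA (σ b) f = aB b f := fun b f => by rw [haA, hσ]
    have hιa : ∀ l f, aA (ι l) f = 0 := fun l f => by
      rw [haA, hexact.apply_apply_eq_zero, map_zero, Derivation.zero_apply]
    obtain ⟨α, hα⟩ := exists_connection_of_section hLeibA hι hexact hπb σ
    obtain ⟨ρ, hρ⟩ := exists_curvatureForm_of_section hLeibA hLeibB hι hexact hπb hσ hσa
    refine ⟨α, ρ, 0, induced_connection_add hι hα, induced_connection_smul hLeibA hιa hι hα,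
      induced_connection_lie hιb hι hα, induced_connection_smul_right hLeibA hσa hι hα,
      induced_connection_eq_add_ad α₀ hcoup hσ hι hα, induced_curvature hιb hι hα hρ,
      fun _ _ => zero_lie _, fun s => ?_⟩
    rw [dform_induced_curvature hι hα hρ]
    exact (congrFun (dform_zero α 2) s).symm
  · rintro ⟨α, ρ, w, hadd, hsmul, hD, hLeib, hlift, hρ, hw, hdρ⟩
    have hF : ∀ a b l, ⁅(ρ - w) ![a, b], l⁆ = α a (α b l) - α b (α a l) - α ⁅a, b⁆ l :=
      fun a b l => by rw [AlternatingMap.sub_apply, sub_lie, hw, sub_zero, hρ]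
    refine exists_extension_of_dform_eq_zero aB hLeibB α₀ α (ρ - w)
      (fun b b' l => LinearMap.congr_fun (hadd b b') l) hsmul hD hLeib hlift hF fun s => ?_
    rw [show ⇑(ρ - w) = ⇑ρ - ⇑w from rfl, dform_sub, Pi.sub_apply, hdρ, sub_self]

/-- Let `B` be a `(k,R)`-Lie–Rinehart algebra, projective over `R`, `L`
an `R`-Lie algebra and `ᾱ : B → Out_D(L)` a coupling (represented here by a
connection `α₀ : B → Der_D(L)` whose curvature takes values in `ad(L)`; lifts of `ᾱ`
are exactly the connections differing from `α₀` by `ad` of a 1-form).  Then an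
extension `0 → L → A → B → 0` of Lie–Rinehart algebras inducing `ᾱ` exists if and
only if the obstruction class `ob(ᾱ) = [d_α ρ] ∈ H³(B; Z(L))` vanishes, i.e. iff for
some lifting pair `(α, ρ)` of `ᾱ` the cocycle `d_α ρ` is the coboundary `d_ᾱ w` of a
central-valued 2-form `w`. -/
theorem extension_exists_iff_obstruction_vanishes
    {k : Type u} [Field k] {R : Type v} [CommRing R] [Algebra k R]
    {B : Type w} [LieRing B] [LieAlgebra k B] [Module R B] [IsScalarTower k R B]
    [Module.Projective R B]
    {L : Type x} [LieRing L] [LieAlgebra k L] [LieAlgebra R L] [IsScalarTower k R L]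
    (aB : B →ₗ[R] Derivation k R R)
    (hLeibB : ∀ (s t : B) (f : R), ⁅s, f • t⁆ = f • ⁅s, t⁆ + aB s f • t)
    -- the coupling `ᾱ`, represented by a connection `α₀ : B → Der_D(L)`:
    (α₀ : B → L →ₗ[k] L)
    (h₀add : ∀ b b' : B, α₀ (b + b') = α₀ b + α₀ b')
    (h₀smul : ∀ (f : R) (b : B) (l : L), α₀ (f • b) l = f • α₀ b l)
    (h₀D : ∀ (b : B) (l l' : L), α₀ b ⁅l, l'⁆ = ⁅α₀ b l, l'⁆ + ⁅l, α₀ b l'⁆)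
    (h₀Leib : ∀ (b : B) (f : R) (l : L), α₀ b (f • l) = f • α₀ b l + aB b f • l)
    (h₀coupling : ∀ b₁ b₂ : B, ∃ l₀ : L, ∀ l : L,
      α₀ b₁ (α₀ b₂ l) - α₀ b₂ (α₀ b₁ l) - α₀ ⁅b₁, b₂⁆ l = ⁅l₀, l⁆) :
    -- existence of a Lie–Rinehart extension `0 → L → A → B → 0` inducing `ᾱ` …
    (∃ (A : Type (max v w x)) (_ : LieRing A) (_ : Module R A)
        (aA : A →ₗ[R] Derivation k R R) (ι : L →ₗ[R] A) (π : A →ₗ[R] B),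
        (∀ (x y : A) (f : R), ⁅x, f • y⁆ = f • ⁅x, y⁆ + aA x f • y) ∧
        Function.Injective ι ∧ Function.Surjective π ∧
        (∀ l l' : L, ι ⁅l, l'⁆ = ⁅ι l, ι l'⁆) ∧
        (∀ x y : A, π ⁅x, y⁆ = ⁅π x, π y⁆) ∧
        LinearMap.range ι = LinearMap.ker π ∧
        (∀ x : A, aA x = aB (π x)) ∧
        -- the extension induces the coupling represented by `α₀`
        (∀ x : A, ∃ l₀ : L, ∀ l : L, ⁅x, ι l⁆ = ι (α₀ (π x) l + ⁅l₀, l⁆))) ↔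
    -- … iff the obstruction class `ob(ᾱ)` vanishes:
    (∃ (α : B → L →ₗ[k] L) (ρ w : B [⋀^Fin 2]→ₗ[R] L),
        (∀ b b' : B, α (b + b') = α b + α b') ∧
        (∀ (f : R) (b : B) (l : L), α (f • b) l = f • α b l) ∧
        (∀ (b : B) (l l' : L), α b ⁅l, l'⁆ = ⁅α b l, l'⁆ + ⁅l, α b l'⁆) ∧
        (∀ (b : B) (f : R) (l : L), α b (f • l) = f • α b l + aB b f • l) ∧
        -- `α` lifts the same coupling `ᾱ` as `α₀`
        (∀ b : B, ∃ l₀ : L, ∀ l : L, α b l = α₀ b l + ⁅l₀, l⁆) ∧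
        -- `(α, ρ)` is a lifting pair: `ad_ρ = F_α`
        (∀ (b₁ b₂ : B) (l : L),
          α b₁ (α b₂ l) - α b₂ (α b₁ l) - α ⁅b₁, b₂⁆ l = ⁅ρ ![b₁, b₂], l⁆) ∧
        -- `w` takes values in the center `Z(L)`
        (∀ (v : Fin 2 → B) (l : L), ⁅w v, l⁆ = 0) ∧
        -- `d_α ρ = d_ᾱ w`
        (∀ s : Fin 3 → B,
          dform (fun b x => α b x) 2 ⇑ρ s = dform (fun b x => α b x) 2 ⇑w s)) :=
  extension_exists_iff_obstruction_vanishes_general aB hLeibB α₀
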